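/- Let k ≥ 2 be an integer, F a field, S_1,…,S_k finite nonempty subsets of ℤ, and c : S_1 × ⋯ × S_k → F a coefficient array whose slice rank is at least 2 (i.e., c is neither zero nor a slice). Then there exist a change of bases given by invertible matrices N_1,…,N_k and linear orders σ_1,…,σ_k on ℤ (with product partial order σ) such that, denoting by Γ′ the support of the transformed coefficient array c′, one has H(Γ′_σ) ≠ 0. -/

import Mathlib

open scoped BigOperators
open Classical

noncomputable section

namespace SlicePaper

/-- Shannon entropy of the `i`-th coordinate marginal of a distribution `p` on `Δ`. -/
def margEnt {ι : Type*} [Fintype ι] (Δ : Finset (ι → ℤ)) (p : (ι → ℤ) → ℝ) (i : ι) : ℝ :=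
  -∑ α ∈ Δ.image (fun γ => γ i),
      (∑ γ ∈ Δ.filter (fun γ => γ i = α), p γ) *
        Real.log (∑ γ ∈ Δ.filter (fun γ => γ i = α), p γ)

/-- The entropy `H(Δ)` of a finite set of integer tuples. -/
def HSet {ι : Type*} [Fintype ι] (Δ : Finset (ι → ℤ)) : ℝ :=
  sSup {e : ℝ | ∃ p : (ι → ℤ) → ℝ, (∀ γ, 0 ≤ p γ) ∧ (∀ γ, p γ ≠ 0 → γ ∈ Δ) ∧
    (∑ γ ∈ Δ, p γ) = 1 ∧ e = ⨅ i, margEnt Δ p i}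

/-- Maximal elements of `Δ` w.r.t. the product of the linear orders `σ i`. -/
def maxElems {ι : Type*} [Fintype ι] (σ : ι → LinearOrder ℤ) (Δ : Finset (ι → ℤ)) :
    Finset (ι → ℤ) :=
  Δ.filter (fun γ => ∀ δ ∈ Δ, (∀ i, (σ i).le (γ i) (δ i)) → γ = δ)

/-- `ξ k = log (k / (k-1)^((k-1)/k))`. -/
def xi (k : ℕ) : ℝ :=
  Real.log ((k : ℝ) / ((k : ℝ) - 1) ^ (((k : ℝ) - 1) / (k : ℝ)))

/-- Slice rank of a coefficient array `c`. -/
def sliceRank {k : ℕ} (F : Type*) [Field F] (τ : Fin k → Type*) [∀ i, Fintype (τ i)]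
    (c : (∀ i, τ i) → F) : ℕ :=
  sInf {r : ℕ | ∃ j : Fin r → Fin k, ∃ a : ∀ l : Fin r, τ (j l) → F,
    ∃ b : ∀ l : Fin r, (((i : {i : Fin k // i ≠ j l}) → τ i.1) → F),
    ∀ s : ∀ i, τ i, c s = ∑ l : Fin r, a l (s (j l)) * b l (fun i => s i.1)}

/-- `n`-th tensor power of a coefficient array. -/
def tpow {k : ℕ} {F : Type*} [Field F] {τ : Fin k → Type*} (c : (∀ i, τ i) → F) (n : ℕ) :
    (∀ i, Fin n → τ i) → F :=
  fun u => ∏ m : Fin n, c (fun i => u i m)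

/-- Support of a coefficient array, as a finite set of integer tuples. -/
def support {k : ℕ} {F : Type*} [Field F] (S : Fin k → Finset ℤ)
    (c : (∀ i, {x : ℤ // x ∈ S i}) → F) : Finset (Fin k → ℤ) :=
  (Finset.univ.filter (fun s : ∀ i, {x : ℤ // x ∈ S i} => c s ≠ 0)).image
    (fun s i => (s i : ℤ))

/-- Section `Γ_I^x`: restrictions to coordinates outside `I` of the γ ∈ Γ agreeing with x on I. -/
def sect {k : ℕ} (Γ : Finset (Fin k → ℤ)) (I : Finset (Fin k)) (x : Fin k → ℤ) :
    Finset ({i : Fin k // i ∉ I} → ℤ) :=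
  (Γ.filter (fun γ => ∀ i ∈ I, γ i = x i)).image (fun γ i => γ i.1)

/-- Section along a single coordinate. -/
def sect1 {k : ℕ} (Γ : Finset (Fin k → ℤ)) (i : Fin k) (a : ℤ) :
    Finset ({j : Fin k // j ≠ i} → ℤ) :=
  (Γ.filter (fun γ => γ i = a)).image (fun γ j => γ j.1)

/-- Trifferent set of strings. -/
def trifferent {n : ℕ} {α : Type*} (A : Finset (Fin n → α)) : Prop :=
  ∀ x ∈ A, ∀ y ∈ A, ∀ z ∈ A, x ≠ y → y ≠ z → x ≠ z →
    ∃ i, x i ≠ y i ∧ y i ≠ z i ∧ x i ≠ z i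

/-- The cube root of unity `ω = e^{2πi/3}`. -/
def w : ℂ := Complex.exp (2 * Real.pi * Complex.I / 3)

/-- The tensor `f_{x,y}(z,t)` used for the trifference problem. -/
def f {n : ℕ} (x y z t : Fin n → ℂ) : ℂ :=
  ∏ i, (x i + y i + z i) * (x i + y i + t i)

/-- Monomial functions `g_{α,β}`. -/
def g {n : ℕ} (α β : Fin n → ℕ) : (Fin n → ℂ) × (Fin n → ℂ) → ℂ :=
  fun q => ∏ i, (q.1 i + q.2 i) ^ α i * (q.1 i * q.2 i) ^ β i

/-!
Choose a nonzero entry `c γ` as pivot and replace each basis vector `x ≠ γ j` of factor `j` by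
`x - (c (γ[j ↦ x]) / c γ) • γ j`. The new array keeps `c γ` but vanishes elsewhere on the lines
through `γ`, and it is still not a slice. So its support `Δ` contains `γ`, no other point of a
line through `γ`, and, for every `i`, a point `u` with `u i ≠ γ i`.

Let `G` be a minimal set of coordinates on which every other point of `Δ` differs from `γ`, and
order the `i`-th coordinate with `γ i` on top for `i ∈ G`, at the bottom otherwise. Then `γ` is
maximal, and for every `i` some maximal point differs from `γ` at `i`; the uniform distribution on
the maximal points then has all marginal entropies positive.
-/

open Function Finset

section Entropy

variable {ι : Type*} {Δ : Finset (ι → ℤ)} {p : (ι → ℤ) → ℝ}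

def marginal (Δ : Finset (ι → ℤ)) (p : (ι → ℤ) → ℝ) (i : ι) (α : ℤ) : ℝ :=
  ∑ γ ∈ Δ.filter (fun γ => γ i = α), p γ

lemma margEnt_eq_sum_negMulLog [Fintype ι] (i : ι) :
    margEnt Δ p i = ∑ α ∈ Δ.image (fun γ => γ i), Real.negMulLog (marginal Δ p i α) := by
  simp only [margEnt, marginal, Real.negMulLog_eq_neg, sum_neg_distrib]

lemma marginal_nonneg (hp : ∀ γ, 0 ≤ p γ) (i : ι) (α : ℤ) : 0 ≤ marginal Δ p i α :=
  sum_nonneg fun γ _ => hp γ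

lemma sum_marginal (hsum : ∑ γ ∈ Δ, p γ = 1) (i : ι) :
    ∑ α ∈ Δ.image (fun γ => γ i), marginal Δ p i α = 1 := by
  rw [← hsum]
  exact sum_fiberwise_of_maps_to (fun γ hγ => mem_image_of_mem _ hγ) p

lemma margEnt_le_card [Fintype ι] (hp : ∀ γ, 0 ≤ p γ) (i : ι) : margEnt Δ p i ≤ #Δ := by
  rw [margEnt_eq_sum_negMulLog]
  calc ∑ α ∈ Δ.image (fun γ => γ i), Real.negMulLog (marginal Δ p i α)
      ≤ ∑ _α ∈ Δ.image (fun γ => γ i), (1 : ℝ) := by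
        refine sum_le_sum fun α _ => ?_
        have hq := marginal_nonneg (Δ := Δ) hp i α
        linarith [Real.negMulLog_le_one_sub_self hq]
    _ ≤ #Δ := by simpa using card_image_le

lemma margEnt_pos [Fintype ι] (hp : ∀ γ, 0 ≤ p γ) (hsum : ∑ γ ∈ Δ, p γ = 1) {i : ι} {x y : ι → ℤ}
    (hx : x ∈ Δ) (hy : y ∈ Δ) (hxy : x i ≠ y i) (hpx : 0 < p x) (hpy : 0 < p y) :
    0 < margEnt Δ p i := by
  have hpos : ∀ z ∈ Δ, 0 < p z → 0 < marginal Δ p i (z i) := fun z hz hpz =>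
    hpz.trans_le (single_le_sum (fun γ _ => hp γ) (mem_filter.2 ⟨hz, rfl⟩))
  have hlt : marginal Δ p i (x i) < 1 := by
    rw [← sum_marginal hsum i]
    exact single_lt_sum (Ne.symm hxy) (mem_image_of_mem _ hx) (mem_image_of_mem _ hy)
      (hpos y hy hpy) fun α _ _ => marginal_nonneg hp i α
  rw [margEnt_eq_sum_negMulLog]
  refine sum_pos' (fun α hα => Real.negMulLog_nonneg (marginal_nonneg hp i α) ?_)
    ⟨x i, mem_image_of_mem _ hx, ?_⟩
  · rw [← sum_marginal hsum i]
    exact single_le_sum (fun β _ => marginal_nonneg hp i β) hα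
  · exact mul_pos_of_neg_of_neg (neg_neg_of_pos (hpos x hx hpx))
      (Real.log_neg (hpos x hx hpx) hlt)

theorem HSet_pos [Fintype ι] [Nonempty ι] (h : ∀ i, ∃ x ∈ Δ, ∃ y ∈ Δ, x i ≠ y i) : 0 < HSet Δ := by
  obtain ⟨x, hx, -⟩ := h (Classical.arbitrary ι)
  set p : (ι → ℤ) → ℝ := fun γ => if γ ∈ Δ then (#Δ : ℝ)⁻¹ else 0
  have hcard : (0 : ℝ) < #Δ := by exact_mod_cast card_pos.2 ⟨x, hx⟩
  have hp : ∀ γ, 0 ≤ p γ := fun γ => by positivity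
  have hpΔ : ∀ γ ∈ Δ, 0 < p γ := fun γ hγ => by simp [p, hγ, hcard]
  have hsum : ∑ γ ∈ Δ, p γ = 1 := by
    rw [sum_congr rfl fun γ hγ => if_pos hγ, sum_const, nsmul_eq_mul, mul_inv_cancel₀ hcard.ne']
  have hbdd : BddAbove {e : ℝ | ∃ p : (ι → ℤ) → ℝ, (∀ γ, 0 ≤ p γ) ∧ (∀ γ, p γ ≠ 0 → γ ∈ Δ) ∧
      (∑ γ ∈ Δ, p γ) = 1 ∧ e = ⨅ i, margEnt Δ p i} := by
    refine ⟨#Δ, ?_⟩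
    rintro e ⟨q, hq, -, -, rfl⟩
    exact (ciInf_le (Set.finite_range _).bddBelow (Classical.arbitrary ι)).trans
      (margEnt_le_card hq _)
  obtain ⟨i, hi⟩ := exists_eq_ciInf_of_finite (f := margEnt Δ p)
  obtain ⟨x, hx, y, hy, hxy⟩ := h i
  refine (hi ▸ margEnt_pos hp hsum hx hy hxy (hpΔ x hx) (hpΔ y hy)).trans_le
    (le_csSup hbdd ⟨p, hp, fun γ hγ => ?_, hsum, rfl⟩)
  by_contra hγΔ
  exact hγ (if_neg hγΔ)

end Entropy

section Orders

abbrev topAt (a : ℤ) : LinearOrder ℤ :=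
  LinearOrder.lift' (fun x => if x = a then (⊤ : WithTop ℤ) else x) fun x y h => by
    dsimp only at h
    split_ifs at h with hx hy hy <;> simp_all

abbrev botAt (a : ℤ) : LinearOrder ℤ :=
  LinearOrder.lift' (fun x => if x = a then (⊥ : WithBot ℤ) else x) fun x y h => by
    dsimp only at h
    split_ifs at h with hx hy hy <;> simp_all

lemma eq_of_topAt_le {a x : ℤ} (h : (topAt a).le a x) : x = a := by
  by_contra hx
  change (if a = a then ⊤ else (a : WithTop ℤ)) ≤ (if x = a then ⊤ else (x : WithTop ℤ)) at h
  rw [if_pos rfl, if_neg hx, top_le_iff] at h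
  exact WithTop.coe_ne_top h

lemma eq_of_le_botAt {a x : ℤ} (h : (botAt a).le x a) : x = a := by
  by_contra hx
  change (if x = a then ⊥ else (x : WithBot ℤ)) ≤ (if a = a then ⊥ else (a : WithBot ℤ)) at h
  rw [if_pos rfl, if_neg hx, le_bot_iff] at h
  exact WithBot.coe_ne_bot h

end Orders

section MaxElems

variable {ι : Type*} [Fintype ι] {σ : ι → LinearOrder ℤ} {Δ : Finset (ι → ℤ)}

lemma exists_mem_maxElems_le {u : ι → ℤ} (hu : u ∈ Δ) :
    ∃ v ∈ maxElems σ Δ, ∀ i, (σ i).le (u i) (v i) := by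
  let P : PartialOrder (ι → ℤ) := @Pi.partialOrder ι (fun _ => ℤ) fun i => (σ i).toPartialOrder
  obtain ⟨v, huv, hvΔ, hv⟩ := @Finset.exists_le_maximal _ P.toPreorder _ Δ hu
  exact ⟨v, mem_filter.2 ⟨hvΔ, fun δ hδ hvδ => @le_antisymm _ P _ _ hvδ (hv hδ hvδ)⟩, huv⟩

end MaxElems

section Separating

variable {ι : Type*} {Δ : Finset (ι → ℤ)} {γ : ι → ℤ} {G : Finset ι} {i : ι}

def Separates (G : Finset ι) (Δ : Finset (ι → ℤ)) (γ : ι → ℤ) : Prop :=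
  ∀ u ∈ Δ, u ≠ γ → ∃ i ∈ G, u i ≠ γ i

abbrev splitOrders (G : Finset ι) (γ : ι → ℤ) (i : ι) : LinearOrder ℤ :=
  if i ∈ G then topAt (γ i) else botAt (γ i)

lemma eq_of_splitOrders_le_of_mem (hi : i ∈ G) {x : ℤ} (h : (splitOrders G γ i).le (γ i) x) :
    x = γ i := by
  rw [splitOrders, if_pos hi] at h
  exact eq_of_topAt_le h

lemma eq_of_le_splitOrders_of_notMem (hi : i ∉ G) {x : ℤ} (h : (splitOrders G γ i).le x (γ i)) :
    x = γ i := by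
  rw [splitOrders, if_neg hi] at h
  exact eq_of_le_botAt h

variable [Fintype ι]

lemma exists_minimal_separates (Δ : Finset (ι → ℤ)) (γ : ι → ℤ) :
    ∃ G, Separates G Δ γ ∧ ∀ i ∈ G, ¬Separates (G.erase i) Δ γ := by
  have huniv : Separates univ Δ γ := fun u _ hu =>
    let ⟨i, hi⟩ := Function.ne_iff.1 hu
    ⟨i, mem_univ i, hi⟩
  obtain ⟨G, hG, hmin⟩ := exists_min_image (univ.powerset.filter (Separates · Δ γ)) card
    ⟨univ, by simpa using huniv⟩
  refine ⟨G, (mem_filter.1 hG).2, fun i hi hGi => ?_⟩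
  exact (card_erase_lt_of_mem hi).not_ge (hmin (G.erase i) (by simpa using hGi))

lemma mem_maxElems_splitOrders (hG : Separates G Δ γ) (hγ : γ ∈ Δ) :
    γ ∈ maxElems (splitOrders G γ) Δ := by
  refine mem_filter.2 ⟨hγ, fun δ hδ hγδ => ?_⟩
  by_contra hne
  obtain ⟨i, hi, hδi⟩ := hG δ hδ (Ne.symm hne)
  exact hδi (eq_of_splitOrders_le_of_mem hi (hγδ i))

/-- The witness `u` that `G.erase i` does not separate differs from `γ` at `i` and, not lying on a
line through `γ`, at some `l ∉ G`. A maximal `v` above `u` keeps `v l ≠ γ l` since `γ l` is a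
bottom, so `v ≠ γ`; and `v` agrees with `γ` on `G.erase i` since those `γ j` are tops. -/
lemma exists_mem_maxElems_ne_of_mem (hG : Separates G Δ γ) (hi : i ∈ G)
    (hmin : ¬Separates (G.erase i) Δ γ) (hline : ∀ u ∈ Δ, ∀ j, (∀ l ≠ j, u l = γ l) → u = γ) :
    ∃ v ∈ maxElems (splitOrders G γ) Δ, v i ≠ γ i := by
  unfold Separates at hmin
  push Not at hmin
  obtain ⟨u, hu, hne, hagree⟩ := hmin
  obtain ⟨l, hli, hul⟩ : ∃ l ≠ i, u l ≠ γ l := by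
    by_contra! h
    exact hne (hline u hu i h)
  have hlG : l ∉ G := fun hl => hul (hagree l (mem_erase.2 ⟨hli, hl⟩))
  obtain ⟨v, hv, huv⟩ := exists_mem_maxElems_le hu
  refine ⟨v, hv, fun hvi => hul ?_⟩
  have hvγ : v = γ := by
    by_contra hvne
    obtain ⟨j, hj, hvj⟩ := hG v (mem_filter.1 hv).1 hvne
    rcases eq_or_ne j i with rfl | hji
    · exact hvj hvi
    · have hγv := huv j
      rw [hagree j (mem_erase.2 ⟨hji, hj⟩)] at hγv
      exact hvj (eq_of_splitOrders_le_of_mem hj hγv)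
  have hul' := huv l
  rw [hvγ] at hul'
  exact eq_of_le_splitOrders_of_notMem hlG hul'

lemma exists_mem_maxElems_ne_of_notMem (hi : i ∉ G) (hspread : ∃ u ∈ Δ, u i ≠ γ i) :
    ∃ v ∈ maxElems (splitOrders G γ) Δ, v i ≠ γ i := by
  obtain ⟨u, hu, hui⟩ := hspread
  obtain ⟨v, hv, huv⟩ := exists_mem_maxElems_le hu
  refine ⟨v, hv, fun hvi => hui ?_⟩
  have hu' := huv i
  rw [hvi] at hu'
  exact eq_of_le_splitOrders_of_notMem hi hu'

theorem exists_orders_forall_exists_maxElems_ne (hγ : γ ∈ Δ)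
    (hline : ∀ u ∈ Δ, ∀ j, (∀ l ≠ j, u l = γ l) → u = γ) (hspread : ∀ i, ∃ u ∈ Δ, u i ≠ γ i) :
    ∃ σ : ι → LinearOrder ℤ, ∀ i, ∃ x ∈ maxElems σ Δ, ∃ y ∈ maxElems σ Δ, x i ≠ y i := by
  obtain ⟨G, hG, hmin⟩ := exists_minimal_separates Δ γ
  refine ⟨splitOrders G γ, fun i => ?_⟩
  obtain ⟨v, hv, hvi⟩ := if hi : i ∈ G then exists_mem_maxElems_ne_of_mem hG hi (hmin i hi) hline
    else exists_mem_maxElems_ne_of_notMem hi (hspread i)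
  exact ⟨v, hv, γ, mem_maxElems_splitOrders hG hγ, hvi⟩

end Separating

section ChangeOfBasis

variable {ι : Type*} {R : Type*} [CommRing R] {τ : ι → Type*}

def IsSlice (c : (∀ i, τ i) → R) : Prop :=
  ∃ (j : ι) (a : τ j → R) (b : ((i : {i : ι // i ≠ j}) → τ i.1) → R),
    ∀ s, c s = a (s j) * b (fun i => s i.1)

lemma isSlice_of_forall_ne_zero {c : (∀ i, τ i) → R} (j : ι) (a : τ j)
    (h : ∀ s, c s ≠ 0 → s j = a) : IsSlice c := by
  refine ⟨j, fun x => if x = a then 1 else 0,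
    fun r => c ((Equiv.piSplitAt j τ).symm (a, r)), fun s => ?_⟩
  dsimp only
  by_cases hs : s j = a
  · rw [if_pos hs, one_mul, ← hs]
    exact congrArg c ((Equiv.piSplitAt j τ).symm_apply_apply s).symm
  · rw [if_neg hs, zero_mul]
    exact not_not.1 (mt (h s) hs)

variable [Fintype ι] [DecidableEq ι] [∀ i, Fintype (τ i)]

def changeBasis (N : ∀ i, Matrix (τ i) (τ i) R) (c : (∀ i, τ i) → R) : (∀ i, τ i) → R :=
  fun s => ∑ t, (∏ i, N i (s i) (t i)) * c t

lemma changeBasis_changeBasis (M N : ∀ i, Matrix (τ i) (τ i) R) (c : (∀ i, τ i) → R) :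
    changeBasis M (changeBasis N c) = changeBasis (fun i => M i * N i) c := by
  funext s
  calc changeBasis M (changeBasis N c) s
      = ∑ t : ∀ i, τ i, (∏ i, M i (s i) (t i)) * ∑ u : ∀ i, τ i, (∏ i, N i (t i) (u i)) * c u := rfl
    _ = ∑ u : ∀ i, τ i, (∑ t : ∀ i, τ i, ∏ i, M i (s i) (t i) * N i (t i) (u i)) * c u := by
        simp_rw [mul_sum, sum_mul, prod_mul_distrib, mul_assoc]
        exact sum_comm
    _ = ∑ u : ∀ i, τ i, (∏ i, (M i * N i) (s i) (u i)) * c u := by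
        simp_rw [Matrix.mul_apply, Fintype.prod_sum]

lemma changeBasis_one [∀ i, DecidableEq (τ i)] (c : (∀ i, τ i) → R) :
    changeBasis (fun _ => 1) c = c := by
  funext s
  refine (Fintype.sum_eq_single s fun t hts => ?_).trans (by simp)
  obtain ⟨i, hi⟩ := Function.ne_iff.1 hts
  have hst : (1 : Matrix (τ i) (τ i) R) (s i) (t i) = 0 := Matrix.one_apply_ne hi.symm
  rw [prod_eq_zero (mem_univ i) hst, zero_mul]

lemma changeBasis_apply_update [∀ i, DecidableEq (τ i)] (N : ∀ i, Matrix (τ i) (τ i) R)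
    (c : (∀ i, τ i) → R) (γ : ∀ i, τ i) (j : ι) (x : τ j)
    (hN : ∀ i ≠ j, N i (γ i) = (1 : Matrix (τ i) (τ i) R) (γ i)) :
    changeBasis N c (update γ j x) = ∑ y, N j x y * c (update γ j y) := by
  refine (sum_of_injOn (update γ j) (update_injective γ j).injOn (fun _ _ => mem_univ _)
    (fun t _ ht => ?_) fun y _ => ?_).symm
  · obtain ⟨i, hij, hti⟩ : ∃ i ≠ j, t i ≠ γ i := by
      by_contra! h
      exact ht ⟨t j, mem_coe.2 (mem_univ _), update_eq_iff.2 ⟨rfl, fun i hi => (h i hi).symm⟩⟩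
    rw [prod_eq_zero (mem_univ i), zero_mul]
    rw [update_of_ne hij, hN i hij, Matrix.one_apply_ne (Ne.symm hti)]
  · rw [Fintype.prod_eq_single j fun i hij => by
      rw [update_of_ne hij, update_of_ne hij, hN i hij, Matrix.one_apply_eq]]
    simp only [update_self]

lemma IsSlice.changeBasis {c : (∀ i, τ i) → R} (h : IsSlice c) (M : ∀ i, Matrix (τ i) (τ i) R) :
    IsSlice (changeBasis M c) := by
  obtain ⟨j, a, b, hab⟩ := h
  refine ⟨j, fun x => ∑ y, M j x y * a y,
    fun r => ∑ m : (∀ i : {i : ι // i ≠ j}, τ i.1), (∏ i, M i.1 (r i) (m i)) * b m, fun s => ?_⟩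
  rw [sum_mul_sum, ← Fintype.sum_prod_type']
  refine Fintype.sum_equiv (Equiv.piSplitAt j τ) _ _ fun t => ?_
  rw [hab t, Fintype.prod_eq_mul_prod_subtype_ne _ j, Equiv.piSplitAt_apply]
  ring

lemma isSlice_of_isSlice_changeBasis [∀ i, DecidableEq (τ i)] {N : ∀ i, Matrix (τ i) (τ i) R}
    {c : (∀ i, τ i) → R} (hN : ∀ i, IsUnit (N i)) (h : IsSlice (changeBasis N c)) : IsSlice c := by
  choose M hM using fun i => (hN i).exists_left_inv
  simpa only [changeBasis_changeBasis, hM, changeBasis_one] using h.changeBasis M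

end ChangeOfBasis

section Pivot

open Matrix

variable {ι : Type*} [DecidableEq ι] {F : Type*} [Field F] {τ : ι → Type*}
  [∀ i, DecidableEq (τ i)] (γ : ∀ i, τ i) (c : (∀ i, τ i) → F)

def pivotCoeff (i : ι) (x : τ i) : F :=
  if x = γ i then 0 else c (update γ i x) / c γ

/-- Row `x` is `e x - pivotCoeff γ c i x • e (γ i)`: after this change of basis the array vanishes
on the lines through `γ`, except at `γ` itself. -/
def pivotMatrix (i : ι) : Matrix (τ i) (τ i) F :=
  1 - vecMulVec (pivotCoeff γ c i) (Pi.single (γ i) 1)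

lemma isUnit_pivotMatrix [∀ i, Fintype (τ i)] (i : ι) : IsUnit (pivotMatrix γ c i) :=
  IsNilpotent.isUnit_one_sub ⟨2, by simp [sq, vecMulVec_mul_vecMulVec, pivotCoeff]⟩

lemma pivotMatrix_apply_self (i : ι) :
    pivotMatrix γ c i (γ i) = (1 : Matrix (τ i) (τ i) F) (γ i) := by
  ext y
  simp [pivotMatrix, vecMulVec_apply, pivotCoeff]

lemma changeBasis_pivotMatrix_apply_update [Fintype ι] [∀ i, Fintype (τ i)] (j : ι) (x : τ j) :
    changeBasis (pivotMatrix γ c) c (update γ j x) =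
      c (update γ j x) - pivotCoeff γ c j x * c γ := by
  rw [changeBasis_apply_update _ _ _ _ _ fun i _ => pivotMatrix_apply_self γ c i]
  change (pivotMatrix γ c j *ᵥ fun y => c (update γ j y)) x = _
  simp [pivotMatrix, sub_mulVec, vecMulVec_mulVec, mul_comm]

lemma changeBasis_pivotMatrix_apply_pivot [Fintype ι] [∀ i, Fintype (τ i)] [Nonempty ι] :
    changeBasis (pivotMatrix γ c) c γ = c γ := by
  have j := Classical.arbitrary ι
  simpa [pivotCoeff] using changeBasis_pivotMatrix_apply_update γ c j (γ j)

variable {γ c}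

lemma changeBasis_pivotMatrix_apply_update_of_ne [Fintype ι] [∀ i, Fintype (τ i)] (hγ : c γ ≠ 0)
    {j : ι} {x : τ j} (hx : x ≠ γ j) :
    changeBasis (pivotMatrix γ c) c (update γ j x) = 0 := by
  rw [changeBasis_pivotMatrix_apply_update, pivotCoeff, if_neg hx, div_mul_cancel₀ _ hγ, sub_self]

end Pivot

section SliceRank

variable {k : ℕ} {F : Type*} [Field F] {τ : Fin k → Type*} [∀ i, Fintype (τ i)]
  {c : (∀ i, τ i) → F}

lemma exists_ne_zero_of_two_le_sliceRank (hc : 2 ≤ sliceRank F τ c) : ∃ s, c s ≠ 0 := by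
  by_contra! h
  have : sliceRank F τ c ≤ 0 :=
    Nat.sInf_le ⟨Fin.elim0, fun l => l.elim0, fun l => l.elim0, fun s => by simp [h s]⟩
  omega

lemma not_isSlice_of_two_le_sliceRank (hc : 2 ≤ sliceRank F τ c) : ¬IsSlice c := by
  rintro ⟨j, a, b, hab⟩
  have : sliceRank F τ c ≤ 1 :=
    Nat.sInf_le ⟨fun _ => j, fun _ => a, fun _ => b, fun s => by simp [hab s]⟩
  omega

end SliceRank

section Support

variable {k : ℕ} {F : Type*} [Field F] {S : Fin k → Finset ℤ} {d : (∀ i, {x : ℤ // x ∈ S i}) → F}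

lemma coe_mem_support {s : ∀ i, {x : ℤ // x ∈ S i}} (hs : d s ≠ 0) :
    (fun i => (s i : ℤ)) ∈ support S d :=
  mem_image_of_mem _ (mem_filter.2 ⟨mem_univ s, hs⟩)

lemma eq_of_mem_support_of_forall_ne_eq {γ : ∀ i, {x : ℤ // x ∈ S i}}
    (hline : ∀ j x, x ≠ γ j → d (update γ j x) = 0) {u : Fin k → ℤ} (hu : u ∈ support S d)
    (j : Fin k) (hj : ∀ l ≠ j, u l = γ l) : u = fun i => (γ i : ℤ) := by
  obtain ⟨s, hs, rfl⟩ := mem_image.1 hu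
  have hsγ : update γ j (s j) = s := update_eq_iff.2 ⟨rfl, fun l hl => Subtype.ext (hj l hl).symm⟩
  have hsj : s j = γ j := by
    by_contra hne
    exact (mem_filter.1 hs).2 (hsγ ▸ hline j (s j) hne)
  rw [← hsγ, hsj, update_eq_self]

lemma exists_mem_support_ne (hd : ¬IsSlice d) (j : Fin k) (a : {x : ℤ // x ∈ S j}) :
    ∃ u ∈ support S d, u j ≠ a := by
  by_contra! h
  exact hd (isSlice_of_forall_ne_zero j a fun s hs => Subtype.ext (h _ (coe_mem_support hs)))

end Support

theorem stmt4_general {k : ℕ} (hk : 2 ≤ k) (F : Type*) [Field F]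
    (S : Fin k → Finset ℤ)
    (c : (∀ i, {x : ℤ // x ∈ S i}) → F)
    (hc : 2 ≤ sliceRank F (fun i => {x : ℤ // x ∈ S i}) c) :
    ∃ N : ∀ i : Fin k, Matrix {x : ℤ // x ∈ S i} {x : ℤ // x ∈ S i} F,
      (∀ i, IsUnit (N i)) ∧
      ∃ σ : Fin k → LinearOrder ℤ,
        HSet (maxElems σ (support S (fun s =>
          ∑ t : ∀ i, {x : ℤ // x ∈ S i}, (∏ i, N i (s i) (t i)) * c t))) ≠ 0 := by
  have : Nonempty (Fin k) := ⟨⟨0, by omega⟩⟩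
  obtain ⟨γ, hγ⟩ := exists_ne_zero_of_two_le_sliceRank hc
  refine ⟨pivotMatrix γ c, isUnit_pivotMatrix γ c, ?_⟩
  have hdγ : changeBasis (pivotMatrix γ c) c γ ≠ 0 := by
    rwa [changeBasis_pivotMatrix_apply_pivot]
  have hd : ¬IsSlice (changeBasis (pivotMatrix γ c) c) := fun h =>
    not_isSlice_of_two_le_sliceRank hc (isSlice_of_isSlice_changeBasis (isUnit_pivotMatrix γ c) h)
  obtain ⟨σ, hσ⟩ := exists_orders_forall_exists_maxElems_ne (coe_mem_support hdγ)
    (fun _ => eq_of_mem_support_of_forall_ne_eq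
      fun _ _ hx => changeBasis_pivotMatrix_apply_update_of_ne hγ hx)
    fun i => exists_mem_support_ne hd i (γ i)
  exact ⟨σ, (HSet_pos hσ).ne'⟩

/-- if `c` has slice rank at least 2, then after a suitable change of bases
(invertible matrices `N i`) there are linear orders `σ` for which the support `Γ'` of the
transformed array satisfies `H(Γ'_σ) ≠ 0`. -/
theorem stmt4 {k : ℕ} (hk : 2 ≤ k) (F : Type*) [Field F]
    (S : Fin k → Finset ℤ) (hS : ∀ i, (S i).Nonempty)
    (c : (∀ i, {x : ℤ // x ∈ S i}) → F)
    (hc : 2 ≤ sliceRank F (fun i => {x : ℤ // x ∈ S i}) c) :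
    ∃ N : ∀ i : Fin k, Matrix {x : ℤ // x ∈ S i} {x : ℤ // x ∈ S i} F,
      (∀ i, IsUnit (N i)) ∧
      ∃ σ : Fin k → LinearOrder ℤ,
        HSet (maxElems σ (support S (fun s =>
          ∑ t : ∀ i, {x : ℤ // x ∈ S i}, (∏ i, N i (s i) (t i)) * c t))) ≠ 0 :=
  stmt4_general hk F S c hc

end SlicePaper
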